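/- arXiv:math/9712207 — 5 statements merged into one kernel-verified Lean document; each statement's English description precedes it below -/
import Mathlib

section
/- For every n ≥ 1, the number A(n) = (∏_{k=0}^{n-1} (3k+1)!) / (∏_{k=0}^{n-1} (n+k)!) is a positive integer. -/
open Finset Nat

private lemma ind_sum (n c : ℕ) :
    ∑ k ∈ range n, (if c ≤ k then 1 else 0) = n - c := by
  induction n with
  | zero => simp
  | succ n ih =>
    rw [Finset.sum_range_succ, ih]
    split_ifs with h <;> omega

private lemma div_ge_ind {m x : ℕ} (hm : 0 < m) :
    (if m ≤ x then 1 else 0) + (if 2 * m ≤ x then 1 else 0) ≤ x / m := by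
  by_cases h2 : 2 * m ≤ x
  · have h1 : m ≤ x := by omega
    have : 2 ≤ x / m := (Nat.le_div_iff_mul_le hm).2 (by omega)
    simp only [h1, h2, if_true]
    omega
  · by_cases h1 : m ≤ x
    · have : 1 ≤ x / m := (Nat.le_div_iff_mul_le hm).2 (by omega)
      simp only [h1, h2, if_true, if_false]
      omega
    · simp only [h1, h2, if_false]
      exact Nat.zero_le _

private lemma div_le_ind {m x : ℕ} (hm : 0 < m) (hx : x < 3 * m) :
    x / m ≤ (if m ≤ x then 1 else 0) + (if 2 * m ≤ x then 1 else 0) := by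
  by_cases h2 : 2 * m ≤ x
  · have h1 : m ≤ x := by omega
    have : x / m < 3 := (Nat.div_lt_iff_lt_mul hm).2 (by omega)
    simp only [h1, h2, if_true]
    omega
  · by_cases h1 : m ≤ x
    · have : x / m < 2 := (Nat.div_lt_iff_lt_mul hm).2 (by omega)
      simp only [h1, h2, if_true, if_false]
      omega
    · have : x / m = 0 := Nat.div_eq_of_lt (by omega)
      simp only [h1, h2, if_false]
      omega

private lemma sum_ind_F (m n : ℕ) :
    ∑ k ∈ range n, ((if m ≤ 3 * k + 1 then 1 else 0) + (if 2 * m ≤ 3 * k + 1 then 1 else 0))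
      = (n - (m + 1) / 3) + (n - (2 * m + 1) / 3) := by
  rw [Finset.sum_add_distrib]
  have h1 : ∑ k ∈ range n, (if m ≤ 3 * k + 1 then 1 else 0)
      = ∑ k ∈ range n, (if (m + 1) / 3 ≤ k then 1 else 0) := by
    apply Finset.sum_congr rfl
    intro k _
    congr 1
    simp only [eq_iff_iff]
    omega
  have h2 : ∑ k ∈ range n, (if 2 * m ≤ 3 * k + 1 then 1 else 0)
      = ∑ k ∈ range n, (if (2 * m + 1) / 3 ≤ k then 1 else 0) := by
    apply Finset.sum_congr rfl
    intro k _
    congr 1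
    simp only [eq_iff_iff]
    omega
  rw [h1, h2, ind_sum, ind_sum]

/-- Lower bound on `∑ (3k+1)/m`. -/
private lemma F_lower (m n : ℕ) (hm : 0 < m) :
    (n - (m + 1) / 3) + (n - (2 * m + 1) / 3) ≤ ∑ k ∈ range n, (3 * k + 1) / m := by
  rw [← sum_ind_F m n]
  exact Finset.sum_le_sum fun k _ => div_ge_ind hm

/-- One full period of `∑ (3k+1)/m` starting at 0. -/
private lemma F_period (m : ℕ) (hm : 0 < m) :
    ∑ k ∈ range m, (3 * k + 1) / m = m := by
  have hle : ∑ k ∈ range m, (3 * k + 1) / m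
      ≤ (m - (m + 1) / 3) + (m - (2 * m + 1) / 3) := by
    rw [← sum_ind_F m m]
    exact Finset.sum_le_sum fun k hk => by
      have : k < m := Finset.mem_range.mp hk
      exact div_le_ind hm (by omega)
  have hge := F_lower m m hm
  omega

/-- Block lemma for the `(3k+1)/m` sums: a block of `m` consecutive terms. -/
private lemma blockF (m : ℕ) (hm : 0 < m) (N : ℕ) :
    ∑ k ∈ range m, (3 * (N + k) + 1) / m = 3 * N + m := by
  induction N with
  | zero => simpa using F_period m hm
  | succ N ih =>
    have hshift : ∀ k, 3 * (N + 1 + k) + 1 = 3 * (N + (k + 1)) + 1 := fun k => by ring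
    have h1 : ∑ k ∈ range m, (3 * (N + 1 + k) + 1) / m
        = ∑ k ∈ range m, (3 * (N + (k + 1)) + 1) / m := by
      apply Finset.sum_congr rfl
      intro k _
      rw [hshift k]
    have h2 : (∑ k ∈ range m, (3 * (N + (k + 1)) + 1) / m) + (3 * (N + 0) + 1) / m
        = ∑ k ∈ range (m + 1), (3 * (N + k) + 1) / m :=
      (Finset.sum_range_succ' (fun k => (3 * (N + k) + 1) / m) m).symm
    have h3 : ∑ k ∈ range (m + 1), (3 * (N + k) + 1) / m
        = (∑ k ∈ range m, (3 * (N + k) + 1) / m) + (3 * (N + m) + 1) / m :=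
      Finset.sum_range_succ _ m
    have h4 : (3 * (N + m) + 1) / m = (3 * N + 1) / m + 3 := by
      have : 3 * (N + m) + 1 = (3 * N + 1) + 3 * m := by ring
      rw [this, Nat.add_mul_div_right _ _ hm]
    simp only [Nat.add_zero] at h2
    omega

/-- Block lemma for `j/m` sums: a block of `m` consecutive terms. -/
private lemma blockG (m : ℕ) (hm : 0 < m) (N : ℕ) :
    ∑ k ∈ range m, (N + k) / m = N := by
  induction N with
  | zero =>
    apply Finset.sum_eq_zero
    intro k hk
    exact Nat.div_eq_of_lt (by simpa using Finset.mem_range.mp hk)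
  | succ N ih =>
    have h1 : ∑ k ∈ range m, (N + 1 + k) / m
        = ∑ k ∈ range m, (N + (k + 1)) / m := by
      apply Finset.sum_congr rfl
      intro k _
      congr 1
      ring
    have h2 : (∑ k ∈ range m, (N + (k + 1)) / m) + (N + 0) / m
        = ∑ k ∈ range (m + 1), (N + k) / m :=
      (Finset.sum_range_succ' (fun k => (N + k) / m) m).symm
    have h3 : ∑ k ∈ range (m + 1), (N + k) / m
        = (∑ k ∈ range m, (N + k) / m) + (N + m) / m :=
      Finset.sum_range_succ _ m
    have h4 : (N + m) / m = N / m + 1 := Nat.add_div_right _ hm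
    simp only [Nat.add_zero] at h2
    omega

/-- Block lemma in `Ico` form. -/
private lemma blockW (m : ℕ) (hm : 0 < m) (N : ℕ) :
    ∑ j ∈ Finset.Ico N (N + m), j / m = N := by
  rw [Finset.sum_Ico_eq_sum_range]
  simpa using blockG m hm N

private lemma G_as_Ico (m n : ℕ) :
    ∑ k ∈ range n, (n + k) / m = ∑ j ∈ Finset.Ico n (n + n), j / m := by
  rw [Finset.sum_Ico_eq_sum_range]
  simp

/-- Key divisibility inequality on floor sums. -/
private lemma key (m : ℕ) (hm : 0 < m) :
    ∀ n, ∑ k ∈ range n, (n + k) / m ≤ ∑ k ∈ range n, (3 * k + 1) / m := by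
  intro n
  induction n using Nat.strong_induction_on with
  | _ n ih =>
    by_cases hnm : m ≤ n
    · -- inductive step: n = p + m
      obtain ⟨p, rfl⟩ : ∃ p, n = p + m := ⟨n - m, by omega⟩
      have ihp := ih p (by omega)
      -- F part
      have hF : ∑ k ∈ range (p + m), (3 * k + 1) / m
          = (∑ k ∈ range p, (3 * k + 1) / m) + (3 * p + m) := by
        rw [Finset.range_eq_Ico, ← Finset.sum_Ico_consecutive _ (Nat.zero_le p) (by omega),
          ← Finset.range_eq_Ico]
        congr 1
        rw [Finset.sum_Ico_eq_sum_range]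
        have : p + m - p = m := by omega
        rw [this]
        simpa using blockF m hm p
      -- G part
      have hG : ∑ k ∈ range (p + m), (p + m + k) / m
          = (∑ k ∈ range p, (p + k) / m) + (3 * p + m) := by
        rw [G_as_Ico, G_as_Ico]
        have hr : p + m + (p + m) = p + p + m + m := by omega
        rw [hr]
        have e1 : ∑ j ∈ Finset.Ico p (p + m), j / m = p := blockW m hm p
        have e2 : ∑ j ∈ Finset.Ico (p + p) (p + p + m), j / m = p + p := blockW m hm (p + p)
        have e3 : ∑ j ∈ Finset.Ico (p + p + m) (p + p + m + m), j / m = p + p + m :=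
          blockW m hm (p + p + m)
        have c1 : (∑ j ∈ Finset.Ico p (p + m), j / m)
            + ∑ j ∈ Finset.Ico (p + m) (p + m + (p + m)), j / m
            = ∑ j ∈ Finset.Ico p (p + m + (p + m)), j / m :=
          Finset.sum_Ico_consecutive _ (by omega) (by omega)
        have c2 : (∑ j ∈ Finset.Ico p (p + p), j / m)
            + ∑ j ∈ Finset.Ico (p + p) (p + p + m), j / m
            = ∑ j ∈ Finset.Ico p (p + p + m), j / m :=
          Finset.sum_Ico_consecutive _ (by omega) (by omega)
        have c3 : (∑ j ∈ Finset.Ico p (p + p + m), j / m)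
            + ∑ j ∈ Finset.Ico (p + p + m) (p + p + m + m), j / m
            = ∑ j ∈ Finset.Ico p (p + p + m + m), j / m :=
          Finset.sum_Ico_consecutive _ (by omega) (by omega)
        rw [hr] at c1
        omega
      omega
    · -- base case: n < m
      push_neg at hnm
      by_cases h2 : 2 * n ≤ m
      · have : ∑ k ∈ range n, (n + k) / m = 0 := by
          apply Finset.sum_eq_zero
          intro k hk
          have : k < n := Finset.mem_range.mp hk
          exact Nat.div_eq_of_lt (by omega)
        omega
      · push_neg at h2
        have hGle : ∑ k ∈ range n, (n + k) / m ≤ 2 * n - m := by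
          calc ∑ k ∈ range n, (n + k) / m
              ≤ ∑ k ∈ range n, (if m - n ≤ k then 1 else 0) := by
                apply Finset.sum_le_sum
                intro k hk
                have hkn : k < n := Finset.mem_range.mp hk
                by_cases hc : m ≤ n + k
                · have : (n + k) / m < 2 := (Nat.div_lt_iff_lt_mul hm).2 (by omega)
                  have : m - n ≤ k := by omega
                  simp [this]
                  omega
                · have : (n + k) / m = 0 := Nat.div_eq_of_lt (by omega)
                  omega
            _ = n - (m - n) := ind_sum n (m - n)
            _ ≤ 2 * n - m := by omega
        have hFge := F_lower m n hm
        omega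

theorem asm_number_is_positive_integer (n : ℕ) (hn : 1 ≤ n) :
    ∃ A : ℕ, 0 < A ∧
      A * ∏ k ∈ Finset.range n, Nat.factorial (n + k)
        = ∏ k ∈ Finset.range n, Nat.factorial (3 * k + 1) := by
  set D := ∏ k ∈ Finset.range n, Nat.factorial (n + k) with hDdef
  set N := ∏ k ∈ Finset.range n, Nat.factorial (3 * k + 1) with hNdef
  have hD : D ≠ 0 := Finset.prod_ne_zero_iff.2 fun k _ => (Nat.factorial_pos _).ne'
  have hN : N ≠ 0 := Finset.prod_ne_zero_iff.2 fun k _ => (Nat.factorial_pos _).ne'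
  have hdvd : D ∣ N := by
    rw [← Nat.factorization_le_iff_dvd hD hN, Finsupp.le_def]
    intro p
    by_cases hp : p.Prime
    · haveI : Fact p.Prime := ⟨hp⟩
      have hfact : ∀ (x : ℕ), x < 3 * n →
          (Nat.factorial x).factorization p = ∑ i ∈ Finset.Ico 1 (3 * n), x / p ^ i := by
        intro x hx
        rw [Nat.factorization_def _ hp]
        apply padicValNat_factorial
        rcases Nat.eq_zero_or_pos x with hx0 | hx0
        · subst hx0; simp [Nat.log_zero_right]; omega
        · rw [Nat.log_lt_iff_lt_pow hp.one_lt hx0.ne']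
          calc x < 3 * n := hx
            _ < 2 ^ (3 * n) := Nat.lt_two_pow_self
            _ ≤ p ^ (3 * n) := Nat.pow_le_pow_left hp.two_le _
      rw [hDdef, hNdef, Nat.factorization_prod (fun k _ => (Nat.factorial_pos _).ne'),
        Nat.factorization_prod (fun k _ => (Nat.factorial_pos _).ne')]
      rw [Finset.sum_apply', Finset.sum_apply']
      calc ∑ k ∈ range n, (Nat.factorial (n + k)).factorization p
          = ∑ k ∈ range n, ∑ i ∈ Finset.Ico 1 (3 * n), (n + k) / p ^ i := by
            apply Finset.sum_congr rfl
            intro k hk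
            have : k < n := Finset.mem_range.mp hk
            exact hfact _ (by omega)
        _ = ∑ i ∈ Finset.Ico 1 (3 * n), ∑ k ∈ range n, (n + k) / p ^ i :=
            Finset.sum_comm
        _ ≤ ∑ i ∈ Finset.Ico 1 (3 * n), ∑ k ∈ range n, (3 * k + 1) / p ^ i := by
            apply Finset.sum_le_sum
            intro i _
            exact key (p ^ i) (pow_pos hp.pos _) n
        _ = ∑ k ∈ range n, ∑ i ∈ Finset.Ico 1 (3 * n), (3 * k + 1) / p ^ i :=
            Finset.sum_comm
        _ = ∑ k ∈ range n, (Nat.factorial (3 * k + 1)).factorization p := by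
            apply Finset.sum_congr rfl
            intro k hk
            have : k < n := Finset.mem_range.mp hk
            exact (hfact _ (by omega)).symm
    · simp [Nat.factorization_eq_zero_of_not_prime _ hp]
  obtain ⟨A, hA⟩ := hdvd
  refine ⟨A, ?_, ?_⟩
  · rcases Nat.eq_zero_or_pos A with h0 | h0
    · exfalso; rw [h0, Nat.mul_zero] at hA; exact hN hA
    · exact h0
  · rw [hA]; ring
end

section
/- There is a bijection between n×n alternating sign matrices and square-ice states on the n×n grid with domain-wall boundary conditions, i.e., orientations of the edges of the n×n grid graph (with boundary edges pointing inward on the left and right sides and outward on the top and bottom) such that each interior vertex has exactly two incoming and two outgoing edges. -/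
/-- An `n × n` alternating sign matrix: entries in `{-1,0,1}`, every row and
column sums to `1`, and all partial (prefix) sums of rows and columns lie in
`{0,1}` (equivalently, nonzero entries alternate in sign, beginning and ending
with `1`). -/
def IsASM {n : ℕ} (M : Matrix (Fin n) (Fin n) ℤ) : Prop :=
  (∀ i j, M i j = -1 ∨ M i j = 0 ∨ M i j = 1) ∧
  (∀ i, ∑ j, M i j = 1) ∧
  (∀ j, ∑ i, M i j = 1) ∧
  (∀ i k, (∑ j ∈ Finset.Iic k, M i j) = 0 ∨ (∑ j ∈ Finset.Iic k, M i j) = 1) ∧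
  (∀ j k, (∑ i ∈ Finset.Iic k, M i j) = 0 ∨ (∑ i ∈ Finset.Iic k, M i j) = 1)

/-- The number of entries of `M` equal to `-1`. -/
def negCount {n : ℕ} (M : Matrix (Fin n) (Fin n) ℤ) : ℕ :=
  (Finset.univ.filter fun p : Fin n × Fin n => M p.1 p.2 = -1).card

/-- A square-ice state on the `n × n` grid with domain-wall boundary
conditions.  `hor i j = true` means the horizontal edge at row `i`, between
columns `j-1` and `j`, points to the right; `ver a j = true` means the
vertical edge at column `j`, between rows `a-1` and `a`, points down.
Boundary edges point inward on the left and right sides and outward at the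
top and bottom, and every vertex has exactly two incoming and two outgoing
edges (the ice rule). -/
structure IceState (n : ℕ) where
  hor : Fin n → Fin (n + 1) → Bool
  ver : Fin (n + 1) → Fin n → Bool
  left : ∀ i, hor i 0 = true
  right : ∀ i, hor i (Fin.last n) = false
  top : ∀ j, ver 0 j = false
  bottom : ∀ j, ver (Fin.last n) j = true
  ice : ∀ i j : Fin n,
    (if hor i j.castSucc then 1 else 0) + (if hor i j.succ then 0 else 1)
      + (if ver i.castSucc j then 1 else 0) + (if ver i.succ j then 0 else 1)
      = (2 : ℕ)

namespace AsmIceAux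

open Finset

variable {n : ℕ}

lemma IceState.ext' {s t : IceState n} (h1 : s.hor = t.hor) (h2 : s.ver = t.ver) :
    s = t := by
  cases s; cases t; cases h1; cases h2; rfl

/-- Horizontal-edge indicator, extended to `ℕ` by `0`. -/
def gh (s : IceState n) (i : Fin n) (m : ℕ) : ℤ :=
  if h : m < n + 1 then (if s.hor i ⟨m, h⟩ then 1 else 0) else 0

/-- Vertical-edge indicator, extended to `ℕ` by `0`. -/
def gv (s : IceState n) (m : ℕ) (j : Fin n) : ℤ :=
  if h : m < n + 1 then (if s.ver ⟨m, h⟩ j then 1 else 0) else 0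

/-- The matrix associated to an ice state. -/
def toMat (s : IceState n) : Matrix (Fin n) (Fin n) ℤ :=
  fun i j => (if s.hor i j.castSucc then 1 else 0) - (if s.hor i j.succ then 1 else 0)

lemma gh_cast (s : IceState n) (i j : Fin n) :
    gh s i j.val = (if s.hor i j.castSucc then 1 else 0) := by
  have h : (j : ℕ) < n + 1 := j.isLt.trans (Nat.lt_succ_self n)
  rw [gh, dif_pos h]
  rfl

lemma gh_succ (s : IceState n) (i j : Fin n) :
    gh s i (j.val + 1) = (if s.hor i j.succ then 1 else 0) := by
  have h : (j : ℕ) + 1 < n + 1 := Nat.succ_lt_succ j.isLt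
  rw [gh, dif_pos h]
  rfl

lemma gv_cast (s : IceState n) (i j : Fin n) :
    gv s i.val j = (if s.ver i.castSucc j then 1 else 0) := by
  have h : (i : ℕ) < n + 1 := i.isLt.trans (Nat.lt_succ_self n)
  rw [gv, dif_pos h]
  rfl

lemma gv_succ (s : IceState n) (i j : Fin n) :
    gv s (i.val + 1) j = (if s.ver i.succ j then 1 else 0) := by
  have h : (i : ℕ) + 1 < n + 1 := Nat.succ_lt_succ i.isLt
  rw [gv, dif_pos h]
  rfl

lemma gh_zero (s : IceState n) (i : Fin n) : gh s i 0 = 1 := by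
  rw [gh, dif_pos (Nat.succ_pos n)]
  have : (⟨0, Nat.succ_pos n⟩ : Fin (n + 1)) = 0 := rfl
  rw [this, s.left i, if_pos rfl]

lemma gh_last (s : IceState n) (i : Fin n) : gh s i n = 0 := by
  rw [gh, dif_pos (Nat.lt_succ_self n)]
  have : (⟨n, Nat.lt_succ_self n⟩ : Fin (n + 1)) = Fin.last n := rfl
  rw [this, s.right i, if_neg (by simp)]

lemma gv_zero (s : IceState n) (j : Fin n) : gv s 0 j = 0 := by
  rw [gv, dif_pos (Nat.succ_pos n)]
  have : (⟨0, Nat.succ_pos n⟩ : Fin (n + 1)) = 0 := rfl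
  rw [this, s.top j, if_neg (by simp)]

lemma gv_last (s : IceState n) (j : Fin n) : gv s n j = 1 := by
  rw [gv, dif_pos (Nat.lt_succ_self n)]
  have : (⟨n, Nat.lt_succ_self n⟩ : Fin (n + 1)) = Fin.last n := rfl
  rw [this, s.bottom j, if_pos rfl]

/-- The ice rule in subtraction form. -/
lemma ice_sub (s : IceState n) (i j : Fin n) :
    toMat s i j = gv s (i.val + 1) j - gv s i.val j := by
  have h := s.ice i j
  rw [toMat, gv_succ, gv_cast]
  cases hA : s.hor i j.castSucc <;> cases hB : s.hor i j.succ <;>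
    cases hC : s.ver i.castSucc j <;> cases hD : s.ver i.succ j <;>
    simp [hA, hB, hC, hD] at h ⊢

lemma toMat_eq_gh (s : IceState n) (i j : Fin n) :
    toMat s i j = gh s i j.val - gh s i (j.val + 1) := by
  rw [toMat, gh_cast, gh_succ]

/-- Sum of `f` over `{j : Fin n | j < m}` equals the range sum of the extension. -/
lemma filt_sum (f : Fin n → ℤ) (g : ℕ → ℤ) (hg : ∀ j : Fin n, g j.val = f j)
    (m : ℕ) (hm : m ≤ n) :
    ∑ j ∈ univ.filter (fun j : Fin n => (j : ℕ) < m), f j = ∑ x ∈ range m, g x := by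
  induction m with
  | zero => simp
  | succ m ih =>
    have hm' : m < n := hm
    rw [Finset.sum_range_succ, ← ih (Nat.le_of_lt hm')]
    have : univ.filter (fun j : Fin n => (j : ℕ) < m + 1)
        = insert ⟨m, hm'⟩ (univ.filter (fun j : Fin n => (j : ℕ) < m)) := by
      ext j
      simp only [mem_filter, mem_univ, true_and, mem_insert, Nat.lt_succ_iff]
      constructor
      · intro h
        rcases Nat.lt_or_ge (j : ℕ) m with h' | h'
        · exact Or.inr h'
        · exact Or.inl (Fin.ext (le_antisymm h h'))
      · rintro (rfl | h)
        · rfl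
        · exact Nat.le_of_lt h
    rw [this, Finset.sum_insert (by simp), hg ⟨m, hm'⟩]
    ring

lemma Iic_eq_filter (k : Fin n) :
    Finset.Iic k = univ.filter (fun j : Fin n => (j : ℕ) < k.val + 1) := by
  ext j
  simp only [Finset.mem_Iic, Finset.mem_filter, Finset.mem_univ, true_and, Fin.le_def]
  omega

lemma univ_eq_filter : (univ : Finset (Fin n)) = univ.filter (fun j : Fin n => (j : ℕ) < n) := by
  ext j
  simp [j.isLt]

lemma row_partial (s : IceState n) (i : Fin n) (m : ℕ) (hm : m ≤ n) :
    ∑ j ∈ univ.filter (fun j : Fin n => (j : ℕ) < m), toMat s i j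
      = 1 - gh s i m := by
  rw [filt_sum (toMat s i) (fun x => gh s i x - gh s i (x + 1))
      (fun j => (toMat_eq_gh s i j).symm) m hm,
    Finset.sum_range_sub' (fun x => gh s i x), gh_zero]

lemma col_partial (s : IceState n) (j : Fin n) (m : ℕ) (hm : m ≤ n) :
    ∑ i ∈ univ.filter (fun i : Fin n => (i : ℕ) < m), toMat s i j
      = gv s m j := by
  rw [filt_sum (fun i => toMat s i j) (fun x => gv s (x + 1) j - gv s x j)
      (fun i => (ice_sub s i j).symm) m hm,
    Finset.sum_range_sub (fun x => gv s x j), gv_zero, sub_zero]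

lemma gh_mem (s : IceState n) (i : Fin n) (m : ℕ) : gh s i m = 0 ∨ gh s i m = 1 := by
  rw [gh]
  split
  · split
    · exact Or.inr rfl
    · exact Or.inl rfl
  · exact Or.inl rfl

lemma gv_mem (s : IceState n) (j : Fin n) (m : ℕ) : gv s m j = 0 ∨ gv s m j = 1 := by
  rw [gv]
  split
  · split
    · exact Or.inr rfl
    · exact Or.inl rfl
  · exact Or.inl rfl

lemma toMat_isASM (s : IceState n) : IsASM (toMat s) := by
  refine ⟨?_, ?_, ?_, ?_, ?_⟩
  · intro i j
    rw [toMat]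
    split <;> split <;> simp
  · intro i
    rw [show (univ : Finset (Fin n)) = univ.filter (fun j : Fin n => (j : ℕ) < n) from
      univ_eq_filter, row_partial s i n le_rfl, gh_last, sub_zero]
  · intro j
    rw [show (univ : Finset (Fin n)) = univ.filter (fun i : Fin n => (i : ℕ) < n) from
      univ_eq_filter, col_partial s j n le_rfl, gv_last]
  · intro i k
    rw [Iic_eq_filter, row_partial s i (k.val + 1) k.isLt]
    rcases gh_mem s i (k.val + 1) with h | h <;> rw [h] <;> simp
  · intro j k
    rw [Iic_eq_filter, col_partial s j (k.val + 1) k.isLt]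
    exact gv_mem s j (k.val + 1)

/-! ### The inverse construction -/

/-- Row prefix sum over columns `< m`. -/
def Rsum (M : Matrix (Fin n) (Fin n) ℤ) (i : Fin n) (m : ℕ) : ℤ :=
  ∑ j ∈ univ.filter (fun j : Fin n => (j : ℕ) < m), M i j

/-- Column prefix sum over rows `< m`. -/
def Csum (M : Matrix (Fin n) (Fin n) ℤ) (m : ℕ) (j : Fin n) : ℤ :=
  ∑ i ∈ univ.filter (fun i : Fin n => (i : ℕ) < m), M i j

lemma Rsum_zero (M : Matrix (Fin n) (Fin n) ℤ) (i : Fin n) : Rsum M i 0 = 0 := by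
  simp [Rsum]

lemma Csum_zero (M : Matrix (Fin n) (Fin n) ℤ) (j : Fin n) : Csum M 0 j = 0 := by
  simp [Csum]

lemma Rsum_succ (M : Matrix (Fin n) (Fin n) ℤ) (i j : Fin n) :
    Rsum M i (j.val + 1) = Rsum M i j.val + M i j := by
  rw [Rsum, Rsum]
  have : univ.filter (fun j' : Fin n => (j' : ℕ) < j.val + 1)
      = insert j (univ.filter (fun j' : Fin n => (j' : ℕ) < j.val)) := by
    ext j'
    simp only [mem_filter, mem_univ, true_and, mem_insert, Nat.lt_succ_iff]
    constructor
    · intro h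
      rcases Nat.lt_or_ge (j' : ℕ) j.val with h' | h'
      · exact Or.inr h'
      · exact Or.inl (Fin.ext (le_antisymm h h'))
    · rintro (rfl | h)
      · rfl
      · exact Nat.le_of_lt h
  rw [this, Finset.sum_insert (by simp), add_comm]

lemma Csum_succ (M : Matrix (Fin n) (Fin n) ℤ) (i j : Fin n) :
    Csum M (i.val + 1) j = Csum M i.val j + M i j := by
  rw [Csum, Csum]
  have : univ.filter (fun i' : Fin n => (i' : ℕ) < i.val + 1)
      = insert i (univ.filter (fun i' : Fin n => (i' : ℕ) < i.val)) := by
    ext i'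
    simp only [mem_filter, mem_univ, true_and, mem_insert, Nat.lt_succ_iff]
    constructor
    · intro h
      rcases Nat.lt_or_ge (i' : ℕ) i.val with h' | h'
      · exact Or.inr h'
      · exact Or.inl (Fin.ext (le_antisymm h h'))
    · rintro (rfl | h)
      · rfl
      · exact Nat.le_of_lt h
  rw [this, Finset.sum_insert (by simp), add_comm]

lemma Rsum_mem {M : Matrix (Fin n) (Fin n) ℤ} (hM : IsASM M) (i : Fin n) (m : ℕ)
    (hm : m ≤ n) : Rsum M i m = 0 ∨ Rsum M i m = 1 := by
  rcases m with _ | m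
  · exact Or.inl (Rsum_zero M i)
  · have hmn : m < n := hm
    have := hM.2.2.2.1 i ⟨m, hmn⟩
    rwa [Iic_eq_filter] at this

lemma Csum_mem {M : Matrix (Fin n) (Fin n) ℤ} (hM : IsASM M) (j : Fin n) (m : ℕ)
    (hm : m ≤ n) : Csum M m j = 0 ∨ Csum M m j = 1 := by
  rcases m with _ | m
  · exact Or.inl (Csum_zero M j)
  · have hmn : m < n := hm
    have := hM.2.2.2.2 j ⟨m, hmn⟩
    rwa [Iic_eq_filter] at this

lemma Rsum_last {M : Matrix (Fin n) (Fin n) ℤ} (hM : IsASM M) (i : Fin n) :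
    Rsum M i n = 1 := by
  rw [Rsum, ← univ_eq_filter]
  exact hM.2.1 i

lemma Csum_last {M : Matrix (Fin n) (Fin n) ℤ} (hM : IsASM M) (j : Fin n) :
    Csum M n j = 1 := by
  rw [Csum, ← univ_eq_filter]
  exact hM.2.2.1 j

/-- The ice state associated to an ASM. -/
def fromASM (M : Matrix (Fin n) (Fin n) ℤ) (hM : IsASM M) : IceState n where
  hor i k := decide (Rsum M i k.val = 0)
  ver a j := decide (Csum M a.val j = 1)
  left i := by simp [Rsum_zero]
  right i := by simp [Fin.val_last, Rsum_last hM]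
  top j := by simp [Csum_zero]
  bottom j := by simp [Fin.val_last, Csum_last hM]
  ice i j := by
    have hp := Rsum_mem hM i j.val (le_of_lt j.isLt)
    have hq := Rsum_mem hM i (j.val + 1) j.isLt
    have hr := Csum_mem hM j i.val (le_of_lt i.isLt)
    have ht := Csum_mem hM j (i.val + 1) i.isLt
    have hqe := Rsum_succ M i j
    have hte := Csum_succ M i j
    simp only [Fin.coe_castSucc, Fin.val_succ]
    by_cases ha : Rsum M i j.val = 0 <;>
      by_cases hb : Rsum M i (j.val + 1) = 0 <;>
        by_cases hc : Csum M i.val j = 1 <;>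
          by_cases hd : Csum M (i.val + 1) j = 1 <;>
            simp [ha, hb, hc, hd] <;> omega

lemma toMat_fromASM (M : Matrix (Fin n) (Fin n) ℤ) (hM : IsASM M) :
    toMat (fromASM M hM) = M := by
  ext i j
  have hp := Rsum_mem hM i j.val (le_of_lt j.isLt)
  have hq := Rsum_mem hM i (j.val + 1) j.isLt
  have hqe := Rsum_succ M i j
  rw [toMat]
  show (if decide (Rsum M i j.castSucc.val = 0) then (1:ℤ) else 0)
      - (if decide (Rsum M i j.succ.val = 0) then (1:ℤ) else 0) = M i j
  simp only [Fin.coe_castSucc, Fin.val_succ]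
  by_cases ha : Rsum M i j.val = 0 <;>
    by_cases hb : Rsum M i (j.val + 1) = 0 <;>
      simp [ha, hb] <;> omega

lemma gh_fromASM (M : Matrix (Fin n) (Fin n) ℤ) (hM : IsASM M) (i : Fin n)
    (k : Fin (n + 1)) :
    gh (fromASM M hM) i k.val = 1 - Rsum M i k.val := by
  rw [gh, dif_pos k.isLt]
  show (if decide (Rsum M i k.val = 0) then (1:ℤ) else 0) = 1 - Rsum M i k.val
  have hk : Rsum M i k.val = 0 ∨ Rsum M i k.val = 1 :=
    Rsum_mem hM i k.val (Nat.lt_succ_iff.mp k.isLt)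
  by_cases ha : Rsum M i k.val = 0 <;> [simp [ha]; (simp [ha]; omega)]

lemma fromASM_toMat (s : IceState n) :
    fromASM (toMat s) (toMat_isASM s) = s := by
  apply IceState.ext'
  · funext i k
    show decide (Rsum (toMat s) i k.val = 0) = s.hor i k
    have h1 : Rsum (toMat s) i k.val = 1 - gh s i k.val := by
      rw [Rsum, row_partial s i k.val (Nat.lt_succ_iff.mp k.isLt)]
    have h2 : gh s i k.val = (if s.hor i k then 1 else 0) := by
      rw [gh, dif_pos k.isLt]
    rw [h1, h2]
    cases hk : s.hor i k <;> simp [hk]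
  · funext a j
    show decide (Csum (toMat s) a.val j = 1) = s.ver a j
    have h1 : Csum (toMat s) a.val j = gv s a.val j := by
      rw [Csum, col_partial s j a.val (Nat.lt_succ_iff.mp a.isLt)]
    have h2 : gv s a.val j = (if s.ver a j then 1 else 0) := by
      rw [gv, dif_pos a.isLt]
    rw [h1, h2]
    cases hk : s.ver a j <;> simp [hk]

end AsmIceAux

open AsmIceAux in
theorem asm_ice_bijection (n : ℕ) :
    ∃ e : IceState n ≃ {M : Matrix (Fin n) (Fin n) ℤ // IsASM M},
      ∀ (s : IceState n) (i j : Fin n),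
        ((e s).1 i j = 1 ↔
          (s.hor i j.castSucc = true ∧ s.hor i j.succ = false ∧
           s.ver i.castSucc j = false ∧ s.ver i.succ j = true)) ∧
        ((e s).1 i j = -1 ↔
          (s.hor i j.castSucc = false ∧ s.hor i j.succ = true ∧
           s.ver i.castSucc j = true ∧ s.ver i.succ j = false)) := by
  refine ⟨{ toFun := fun s => ⟨toMat s, toMat_isASM s⟩
            invFun := fun M => fromASM M.1 M.2
            left_inv := fun s => fromASM_toMat s
            right_inv := fun M => Subtype.ext (toMat_fromASM M.1 M.2) }, ?_⟩
  intro s i j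
  have hh := s.ice i j
  have hv := ice_sub s i j
  rw [gv_succ, gv_cast] at hv
  constructor
  · show toMat s i j = 1 ↔ _
    rw [toMat] at hv ⊢
    cases hA : s.hor i j.castSucc <;> cases hB : s.hor i j.succ <;>
      cases hC : s.ver i.castSucc j <;> cases hD : s.ver i.succ j <;>
      simp [hA, hB, hC, hD] at hh hv ⊢
  · show toMat s i j = -1 ↔ _
    rw [toMat] at hv ⊢
    cases hA : s.hor i j.castSucc <;> cases hB : s.hor i j.succ <;>
      cases hC : s.ver i.castSucc j <;> cases hD : s.ver i.succ j <;>
      simp [hA, hB, hC, hD] at hh hv ⊢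
end

section
/- With [x] = (q^{x/2} - q^{-x/2})/(q^{1/2} - q^{-1/2}), if x = y + z then [z-1][x][y-1] = [z][x-1][y-1] + [z][x][y] + [z-1][x-1][y] - [2][z][x-1][y]. -/
/-- The Yang–Baxter bracket identity: with `x = y + z`,
`[z-1][x][y-1] = [z][x-1][y-1] + [z][x][y] + [z-1][x-1][y] - [2][z][x-1][y]`,
written with `v = q^{y/2}`, `w = q^{z/2}`, `u = q^{x/2} = v*w`, `t = q^{1/2}`,
`[x] = (q^{x/2} - q^{-x/2})/(q^{1/2} - q^{-1/2})` and `[2] = t + t⁻¹`. -/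
theorem yang_baxter_bracket_identity {K : Type*} [Field K] (t v w : K)
    (ht : t ≠ 0) (hv : v ≠ 0) (hw : w ≠ 0) (ht2 : t - t⁻¹ ≠ 0) :
    ∀ u : K, u = v * w →
      ∀ br : K → K, br = (fun a => (a - a⁻¹) / (t - t⁻¹)) →
        br (w * t⁻¹) * br u * br (v * t⁻¹)
          = br w * br (u * t⁻¹) * br (v * t⁻¹) + br w * br u * br v
            + br (w * t⁻¹) * br (u * t⁻¹) * br v
            - (t + t⁻¹) * br w * br (u * t⁻¹) * br v := by
  rintro u rfl br rfl
  simp only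
  set d := t - t⁻¹ with hd
  have key : ∀ a b c : K, (a / d) * (b / d) * (c / d) = a * b * c / d ^ 3 := by
    intro a b c
    field_simp
  have key2 : ∀ a b c : K, (t + t⁻¹) * (a / d) * (b / d) * (c / d)
      = (t + t⁻¹) * a * b * c / d ^ 3 := by
    intro a b c
    field_simp
  rw [key, key, key, key, key2]
  rw [← add_div, ← add_div, ← sub_div]
  congr 1
  apply mul_left_cancel₀ (pow_ne_zero 2 (mul_ne_zero (mul_ne_zero hw ht) hv))
  field_simp
  have hI : w ^ 2 * t ^ 2 * v ^ 2 * (w⁻¹ ^ 2 * t⁻¹ ^ 2 * v⁻¹ ^ 2) = 1 := by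
    field_simp
  linear_combination (0 : K) * hI
end

section
/- For 0 ≤ k, the matrix with entries S_{i,j} = (t^{k(i+j+1)/2} - t^{-k(i+j+1)/2})/(t^{(i+j+1)/2} - t^{-(i+j+1)/2}) (i.e., the matrix S(n; t^k, t)) has rank at most k. Consequently, if k < n then det S(n; t^k, t) = 0. -/
open Finset in
lemma aux_tel {K : Type*} [Field K] (x : K) (hx : x ≠ 0) (k : ℕ) :
    x ^ (k : ℤ) - x ^ (-(k : ℤ)) =
      (∑ ℓ ∈ Finset.range k, x ^ ((k : ℤ) - 1 - 2 * ℓ)) * (x - x⁻¹) := by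
  rw [Finset.sum_mul]
  have : ∀ ℓ ∈ Finset.range k,
      x ^ ((k : ℤ) - 1 - 2 * ℓ) * (x - x⁻¹) =
        x ^ ((k : ℤ) - 2 * ℓ) - x ^ ((k : ℤ) - 2 * (ℓ + 1 : ℕ)) := by
    intro ℓ _
    rw [mul_sub, ← zpow_add_one₀ hx, ← zpow_sub_one₀ hx]
    congr 2 <;> push_cast <;> ring
  rw [Finset.sum_congr rfl this, Finset.sum_range_sub' (fun ℓ => x ^ ((k : ℤ) - 2 * ℓ))]
  congr 1 <;> congr 1 <;> push_cast <;> ring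

/-- The matrix `S(n; t^k, t)` with entries
`S_{i,j} = (t^{k(i+j+1)/2} - t^{-k(i+j+1)/2})/(t^{(i+j+1)/2} - t^{-(i+j+1)/2})`
(written in terms of `r = t^{1/2}`) has rank at most `k`; in particular its
determinant vanishes when `k < n`. -/
theorem rank_S_le (K : Type*) [Field K] (n k : ℕ) (r : K) (hr : r ≠ 0)
    (hden : ∀ i j : Fin n, r ^ (i.1 + j.1 + 1) - (r ^ (i.1 + j.1 + 1))⁻¹ ≠ 0) :
    Matrix.rank (fun i j : Fin n =>
        (r ^ (k * (i.1 + j.1 + 1)) - (r ^ (k * (i.1 + j.1 + 1)))⁻¹)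
          / (r ^ (i.1 + j.1 + 1) - (r ^ (i.1 + j.1 + 1))⁻¹)) ≤ k ∧
    (k < n →
      Matrix.det (fun i j : Fin n =>
        (r ^ (k * (i.1 + j.1 + 1)) - (r ^ (k * (i.1 + j.1 + 1)))⁻¹)
          / (r ^ (i.1 + j.1 + 1) - (r ^ (i.1 + j.1 + 1))⁻¹)) = 0) := by
  set S : Matrix (Fin n) (Fin n) K := fun i j =>
      (r ^ (k * (i.1 + j.1 + 1)) - (r ^ (k * (i.1 + j.1 + 1)))⁻¹)
        / (r ^ (i.1 + j.1 + 1) - (r ^ (i.1 + j.1 + 1))⁻¹) with hS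
  set A : Matrix (Fin n) (Fin k) K := fun i ℓ =>
      r ^ (((k : ℤ) - 1 - 2 * ℓ.1) * (i.1 + 1)) with hA
  set B : Matrix (Fin k) (Fin n) K := fun ℓ j =>
      r ^ (((k : ℤ) - 1 - 2 * ℓ.1) * j.1) with hB
  have hfact : S = A * B := by
    ext i j
    have hx : r ^ (i.1 + j.1 + 1) ≠ 0 := pow_ne_zero _ hr
    rw [Matrix.mul_apply, hS]
    have hnum : r ^ (k * (i.1 + j.1 + 1)) - (r ^ (k * (i.1 + j.1 + 1)))⁻¹ =
        (∑ ℓ ∈ Finset.range k, (r ^ (i.1 + j.1 + 1) : K) ^ ((k : ℤ) - 1 - 2 * ℓ)) *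
          (r ^ (i.1 + j.1 + 1) - (r ^ (i.1 + j.1 + 1))⁻¹) := by
      rw [← aux_tel _ hx k, zpow_natCast, zpow_neg, zpow_natCast, ← pow_mul,
        mul_comm (i.1 + j.1 + 1) k]
    dsimp only
    rw [hnum, mul_div_assoc, div_self (hden i j), mul_one, ← Fin.sum_univ_eq_sum_range]
    refine Finset.sum_congr rfl fun ℓ _ => ?_
    rw [hA, hB]
    dsimp only
    rw [← zpow_natCast r (i.1 + j.1 + 1), ← zpow_mul, ← zpow_add₀ hr]
    congr 1
    push_cast
    ring
  have hrank : Matrix.rank S ≤ k := by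
    rw [hfact]
    exact (Matrix.rank_mul_le_left A B).trans
      ((Matrix.rank_le_card_width A).trans (by simp))
  refine ⟨hrank, fun hkn => ?_⟩
  by_contra hdet
  have : Matrix.rank S = n := by
    rw [Matrix.rank_of_isUnit S ((Matrix.isUnit_iff_isUnit_det S).mpr
      (isUnit_iff_ne_zero.mpr hdet))]
    simp
  omega
end

section
/- Hankel specialization of the Cauchy determinant: with [x]_t = (t^{x/2} - t^{-x/2})/(t - t^{-1}), the n×n matrix T(n) with entries T(n)_{i,j} = 1/[i+j+1]_t has determinant det T(n) = (∏_{0≤j<i<n} [i-j]_t^2) / ∏_{0≤i,j<n} [i+j+1]_t. -/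
open Finset

lemma prod_pairs_lt_succ {M : Type*} [CommMonoid M] (n : ℕ) (f : Fin (n+1) → Fin (n+1) → M) :
    ∏ p ∈ univ.filter (fun p : Fin (n+1) × Fin (n+1) => p.2 < p.1), f p.1 p.2
      = (∏ p ∈ univ.filter (fun p : Fin n × Fin n => p.2 < p.1), f p.1.castSucc p.2.castSucc)
        * ∏ j : Fin n, f (Fin.last n) j.castSucc := by
  rw [Finset.prod_filter, Finset.prod_filter, Fintype.prod_prod_type, Fintype.prod_prod_type,
    Fin.prod_univ_castSucc (f := fun i => ∏ j : Fin (n+1), if j < i then f i j else 1)]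
  congr 1
  · rw [Finset.prod_congr rfl (fun i _ => Fin.prod_univ_castSucc
      (f := fun j : Fin (n+1) => if j < i.castSucc then f i.castSucc j else 1))]
    simp [Fin.castSucc_lt_castSucc_iff, (Fin.castSucc_lt_last _).not_gt]
  · rw [Fin.prod_univ_castSucc (f := fun j : Fin (n+1) => if j < Fin.last n then f (Fin.last n) j else 1)]
    simp [Fin.castSucc_lt_last]

lemma prod_pairs_all_succ {M : Type*} [CommMonoid M] (n : ℕ) (f : Fin (n+1) → Fin (n+1) → M) :
    ∏ p : Fin (n+1) × Fin (n+1), f p.1 p.2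
      = (∏ p : Fin n × Fin n, f p.1.castSucc p.2.castSucc)
        * (∏ j : Fin n, f (Fin.last n) j.castSucc)
        * (∏ i : Fin n, f i.castSucc (Fin.last n))
        * f (Fin.last n) (Fin.last n) := by
  rw [Fintype.prod_prod_type, Fintype.prod_prod_type,
    Fin.prod_univ_castSucc (f := fun i => ∏ j : Fin (n+1), f i j),
    Finset.prod_congr rfl (fun i _ => Fin.prod_univ_castSucc (f := fun j => f i.castSucc j)),
    Fin.prod_univ_castSucc (f := fun j => f (Fin.last n) j), Finset.prod_mul_distrib]
  rw [mul_mul_mul_comm, ← mul_assoc]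

theorem cauchy_det {K : Type*} [Field K] :
    ∀ (n : ℕ) (x y : Fin n → K), (∀ i j, x i + y j ≠ 0) →
    Matrix.det (Matrix.of fun i j => (x i + y j)⁻¹)
      = (∏ p ∈ univ.filter (fun p : Fin n × Fin n => p.2 < p.1),
          ((x p.1 - x p.2) * (y p.1 - y p.2)))
        / ∏ p : Fin n × Fin n, (x p.1 + y p.2) := by
  intro n
  induction n with
  | zero =>
    intro x y _
    simp [Matrix.det_fin_zero]
  | succ n ih =>
    intro x y hxy
    have hxy' : ∀ i j : Fin n, x i.castSucc + y j.castSucc ≠ 0 := fun i j => hxy _ _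
    set A : Matrix (Fin n) (Fin n) K :=
      Matrix.of fun i j => (x i.castSucc + y j.castSucc)⁻¹ with hA
    set B : Matrix (Fin n) (Fin 1) K :=
      Matrix.of fun i _ => (x i.castSucc + y (Fin.last n))⁻¹ with hB
    set C : Matrix (Fin 1) (Fin n) K :=
      Matrix.of fun _ j => (x (Fin.last n) + y j.castSucc)⁻¹ with hC
    set D : Matrix (Fin 1) (Fin 1) K :=
      Matrix.of fun _ _ => (x (Fin.last n) + y (Fin.last n))⁻¹ with hD
    have hDne : x (Fin.last n) + y (Fin.last n) ≠ 0 := hxy _ _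
    have hblocks : Matrix.fromBlocks A B C D
        = (Matrix.of fun i j : Fin (n+1) => (x i + y j)⁻¹).submatrix finSumFinEquiv finSumFinEquiv := by
      ext a b
      have hlast : ∀ c : Fin 1, finSumFinEquiv (Sum.inr c : Fin n ⊕ Fin 1) = Fin.last n := by
        intro c
        have : c = 0 := Subsingleton.elim _ _
        subst this
        ext
        simp
      have hcs : ∀ c : Fin n, finSumFinEquiv (Sum.inl c : Fin n ⊕ Fin 1) = c.castSucc := by
        intro c; ext; simp
      cases a <;> cases b <;>
        simp [Matrix.fromBlocks, hlast, hcs, hA, hB, hC, hD]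
    have hdet : Matrix.det (Matrix.of fun i j : Fin (n+1) => (x i + y j)⁻¹)
        = (Matrix.fromBlocks A B C D).det := by
      rw [hblocks, Matrix.det_submatrix_equiv_self]
    haveI hDinv : Invertible D := by
      refine ⟨Matrix.of fun _ _ => x (Fin.last n) + y (Fin.last n), ?_, ?_⟩ <;>
      · ext i j
        have : i = j := Subsingleton.elim _ _
        subst this
        simp [Matrix.mul_apply, hD, Matrix.one_apply, inv_mul_cancel₀ hDne,
          mul_inv_cancel₀ hDne]
    have hinv : ⅟D = Matrix.of fun _ _ => x (Fin.last n) + y (Fin.last n) :=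
      invOf_eq_right_inv (by
        ext i j
        have : i = j := Subsingleton.elim _ _
        subst this
        simp [Matrix.mul_apply, hD, Matrix.one_apply, inv_mul_cancel₀ hDne])
    have hSchur : A - B * ⅟D * C
        = Matrix.diagonal (fun i => (x (Fin.last n) - x i.castSucc) * (x i.castSucc + y (Fin.last n))⁻¹)
          * A
          * Matrix.diagonal (fun j => (y (Fin.last n) - y j.castSucc) * (x (Fin.last n) + y j.castSucc)⁻¹) := by
      ext i j
      have hBDC : (B * ⅟D * C) i j
          = (x i.castSucc + y (Fin.last n))⁻¹ * (x (Fin.last n) + y (Fin.last n))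
            * (x (Fin.last n) + y j.castSucc)⁻¹ := by
        rw [hinv]
        simp [Matrix.mul_apply, hB, hC]
      rw [Matrix.sub_apply, hBDC]
      simp only [Matrix.mul_diagonal, Matrix.diagonal_mul, hA, Matrix.of_apply]
      have h1 : x i.castSucc + y j.castSucc ≠ 0 := hxy _ _
      have h2 : x i.castSucc + y (Fin.last n) ≠ 0 := hxy _ _
      have h3 : x (Fin.last n) + y j.castSucc ≠ 0 := hxy _ _
      field_simp
      ring
    rw [hdet, Matrix.det_fromBlocks₂₂, hSchur, Matrix.det_mul, Matrix.det_mul,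
      Matrix.det_diagonal, Matrix.det_diagonal,
      ih (fun i => x i.castSucc) (fun j => y j.castSucc) hxy']
    have hDdet : D.det = (x (Fin.last n) + y (Fin.last n))⁻¹ := by
      simp [hD, Matrix.det_fin_one]
    rw [hDdet]
    rw [prod_pairs_lt_succ n (fun i j => (x i - x j) * (y i - y j)),
      prod_pairs_all_succ n (fun i j => x i + y j)]
    have hP1 : (∏ i : Fin n, (x i.castSucc + y (Fin.last n))) ≠ 0 :=
      prod_ne_zero_iff.2 fun i _ => hxy _ _
    have hP2 : (∏ j : Fin n, (x (Fin.last n) + y j.castSucc)) ≠ 0 :=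
      prod_ne_zero_iff.2 fun j _ => hxy _ _
    have hP3 : (∏ p : Fin n × Fin n, (x p.1.castSucc + y p.2.castSucc)) ≠ 0 :=
      prod_ne_zero_iff.2 fun p _ => hxy' _ _
    rw [show (∏ i : Fin n, (x (Fin.last n) - x i.castSucc) * (x i.castSucc + y (Fin.last n))⁻¹)
        = (∏ i : Fin n, (x (Fin.last n) - x i.castSucc)) / ∏ i : Fin n, (x i.castSucc + y (Fin.last n)) by
      simp [div_eq_mul_inv, Finset.prod_mul_distrib, ← Finset.prod_inv_distrib]]
    rw [show (∏ j : Fin n, (y (Fin.last n) - y j.castSucc) * (x (Fin.last n) + y j.castSucc)⁻¹)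
        = (∏ j : Fin n, (y (Fin.last n) - y j.castSucc)) / ∏ j : Fin n, (x (Fin.last n) + y j.castSucc) by
      simp [div_eq_mul_inv, Finset.prod_mul_distrib, ← Finset.prod_inv_distrib]]
    simp only [Finset.prod_mul_distrib]
    field_simp

lemma card_pairs (n : ℕ) :
    n + 2 * (univ.filter (fun p : Fin n × Fin n => p.2 < p.1)).card = n * n := by
  have h : (univ.filter (fun p : Fin n × Fin n => p.2 < p.1)).card = ∑ i : Fin n, i.1 := by
    rw [Finset.card_filter, Fintype.sum_prod_type]
    refine Finset.sum_congr rfl fun i _ => ?_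
    rw [Finset.sum_boole]
    have : univ.filter (fun j : Fin n => j < i) = Iio i := by ext j; simp
    rw [this, Fin.card_Iio]; simp
  rw [h, Fin.sum_univ_eq_sum_range (fun i => i) n]
  have h2 := Finset.sum_range_id_mul_two n
  cases n with
  | zero => simp
  | succ m =>
    simp only [Nat.add_sub_cancel] at h2
    rw [show 2 * ∑ i ∈ range (m+1), i = (∑ i ∈ range (m+1), i) * 2 by ring, h2]
    ring
set_option maxHeartbeats 1000000 in
/-- Hankel specialization of the Cauchy determinant: with
`[x]_t = (t^{x/2} - t^{-x/2})/(t - t⁻¹)` written in terms of `r = t^{1/2}` as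
`[m]_t = (r^m - r^{-m})/(r^2 - r^{-2})`, the matrix `T(n)_{i,j} = 1/[i+j+1]_t`
has determinant `∏_{0≤j<i<n} [i-j]_t^2 / ∏_{0≤i,j<n} [i+j+1]_t`. -/
theorem det_T_eval {K : Type*} [Field K] (n : ℕ) (r : K)
    (hr : r ≠ 0) (hbr : r ^ 2 - (r ^ 2)⁻¹ ≠ 0)
    (hden : ∀ i j : Fin n,
      (r ^ (i.1 + j.1 + 1) - (r ^ (i.1 + j.1 + 1))⁻¹) / (r ^ 2 - (r ^ 2)⁻¹) ≠ 0) :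
    Matrix.det (fun i j : Fin n =>
        ((r ^ (i.1 + j.1 + 1) - (r ^ (i.1 + j.1 + 1))⁻¹) / (r ^ 2 - (r ^ 2)⁻¹))⁻¹)
      = (∏ p ∈ univ.filter (fun p : Fin n × Fin n => p.2 < p.1),
          ((r ^ (p.1.1 - p.2.1) - (r ^ (p.1.1 - p.2.1))⁻¹) / (r ^ 2 - (r ^ 2)⁻¹)) ^ 2)
        / ∏ p : Fin n × Fin n,
            (r ^ (p.1.1 + p.2.1 + 1) - (r ^ (p.1.1 + p.2.1 + 1))⁻¹) / (r ^ 2 - (r ^ 2)⁻¹) := by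
  have hrp : ∀ m : ℕ, r ^ m ≠ 0 := fun m => pow_ne_zero m hr
  have hdm : ∀ i j : Fin n, r ^ (i.1 + j.1 + 1) - (r ^ (i.1 + j.1 + 1))⁻¹ ≠ 0 := by
    intro i j h0
    exact hden i j (by rw [h0, zero_div])
  have hsum : ∀ i j : Fin n, r^(2*i.1+1) + -(r^(2*j.1+1))⁻¹
      = r ^ i.1 * (r ^ j.1)⁻¹ * (r ^ (i.1+j.1+1) - (r ^ (i.1+j.1+1))⁻¹) := by
    intro i j
    field_simp
    ring
  have hxyne : ∀ i j : Fin n, r^(2*i.1+1) + -(r^(2*j.1+1))⁻¹ ≠ 0 := by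
    intro i j
    rw [hsum i j]
    exact mul_ne_zero (mul_ne_zero (hrp _) (inv_ne_zero (hrp _))) (hdm i j)
  have hC : Matrix.det (Matrix.of fun i j : Fin n => (r^(2*i.1+1) + -(r^(2*j.1+1))⁻¹)⁻¹)
      = (∏ p ∈ univ.filter (fun p : Fin n × Fin n => p.2 < p.1),
          ((r^(2*p.1.1+1) - r^(2*p.2.1+1)) * (-(r^(2*p.1.1+1))⁻¹ - -(r^(2*p.2.1+1))⁻¹)))
        / ∏ p : Fin n × Fin n, (r^(2*p.1.1+1) + -(r^(2*p.2.1+1))⁻¹) :=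
    cauchy_det n _ _ hxyne
  have hTfact : (Matrix.of fun i j : Fin n =>
        ((r ^ (i.1 + j.1 + 1) - (r ^ (i.1 + j.1 + 1))⁻¹) / (r ^ 2 - (r ^ 2)⁻¹))⁻¹)
      = Matrix.diagonal (fun i : Fin n => (r^2 - (r^2)⁻¹) * r ^ i.1)
        * (Matrix.of fun i j : Fin n => (r^(2*i.1+1) + -(r^(2*j.1+1))⁻¹)⁻¹)
        * Matrix.diagonal (fun j : Fin n => (r ^ j.1)⁻¹) := by
    ext i j
    rw [Matrix.mul_diagonal, Matrix.diagonal_mul, Matrix.of_apply, Matrix.of_apply, hsum i j]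
    have h1 := hdm i j
    have h2 := hrp i.1
    have h3 := hrp j.1
    generalize hu : r ^ (i.1 + j.1 + 1) - (r ^ (i.1 + j.1 + 1))⁻¹ = u at h1 ⊢
    field_simp
  show (Matrix.of fun i j : Fin n =>
        ((r ^ (i.1 + j.1 + 1) - (r ^ (i.1 + j.1 + 1))⁻¹) / (r ^ 2 - (r ^ 2)⁻¹))⁻¹).det = _
  rw [hTfact, Matrix.det_mul, Matrix.det_mul, Matrix.det_diagonal, Matrix.det_diagonal, hC]
  have hdiag1 : ∏ i : Fin n, ((r^2 - (r^2)⁻¹) * r ^ i.1)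
      = (r^2 - (r^2)⁻¹)^n * ∏ i : Fin n, r ^ i.1 := by
    rw [Finset.prod_mul_distrib, Finset.prod_const, Finset.card_univ, Fintype.card_fin]
  have hdiag2 : ∏ j : Fin n, (r ^ j.1)⁻¹ = (∏ j : Fin n, r ^ j.1)⁻¹ :=
    Finset.prod_inv_distrib _
  have hQne : (∏ i : Fin n, r ^ i.1) ≠ 0 := prod_ne_zero_iff.2 fun i _ => hrp _
  have hnum : (∏ p ∈ univ.filter (fun p : Fin n × Fin n => p.2 < p.1),
        ((r^(2*p.1.1+1) - r^(2*p.2.1+1)) * (-(r^(2*p.1.1+1))⁻¹ - -(r^(2*p.2.1+1))⁻¹)))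
      = ∏ p ∈ univ.filter (fun p : Fin n × Fin n => p.2 < p.1),
          ((r^2 - (r^2)⁻¹)^2
            * ((r ^ (p.1.1 - p.2.1) - (r ^ (p.1.1 - p.2.1))⁻¹) / (r ^ 2 - (r ^ 2)⁻¹)) ^ 2) := by
    refine Finset.prod_congr rfl fun p hp => ?_
    have hlt : p.2.1 < p.1.1 := (Finset.mem_filter.1 hp).2
    have hd : 2 * p.1.1 + 1 = 2 * (p.2.1 + (p.1.1 - p.2.1)) + 1 := by omega
    rw [hd]
    generalize p.1.1 - p.2.1 = d
    rw [div_pow, mul_comm ((r^2 - (r^2)⁻¹)^2), div_mul_cancel₀ _ (pow_ne_zero 2 hbr)]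
    field_simp
    ring
  have hden2 : (∏ p : Fin n × Fin n, (r^(2*p.1.1+1) + -(r^(2*p.2.1+1))⁻¹))
      = ∏ p : Fin n × Fin n, (r ^ p.1.1 * (r ^ p.2.1)⁻¹
          * ((r^2 - (r^2)⁻¹)
            * ((r ^ (p.1.1+p.2.1+1) - (r ^ (p.1.1+p.2.1+1))⁻¹) / (r ^ 2 - (r ^ 2)⁻¹)))) := by
    refine Finset.prod_congr rfl fun p _ => ?_
    rw [hsum p.1 p.2, mul_comm (r^2 - (r^2)⁻¹), div_mul_cancel₀ _ hbr]
  rw [hnum, hden2]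
  simp only [Finset.prod_mul_distrib]
  -- split products over pairs
  have e1 : (∏ p : Fin n × Fin n, r ^ p.1.1) = (∏ i : Fin n, r ^ i.1) ^ n := by
    rw [Fintype.prod_prod_type]
    simp [Finset.prod_const, ← Finset.prod_pow]
  have e2 : (∏ p : Fin n × Fin n, (r ^ p.2.1)⁻¹) = ((∏ i : Fin n, r ^ i.1) ^ n)⁻¹ := by
    rw [Fintype.prod_prod_type]
    simp [Finset.prod_const, Finset.prod_inv_distrib, ← Finset.prod_pow]
  have e3 : (∏ _p : Fin n × Fin n, (r^2 - (r^2)⁻¹)) = (r^2 - (r^2)⁻¹) ^ (n * n) := by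
    rw [Finset.prod_const, Finset.card_univ, Fintype.card_prod, Fintype.card_fin]
  have e4 : (∏ _p ∈ univ.filter (fun p : Fin n × Fin n => p.2 < p.1), (r^2 - (r^2)⁻¹)^2)
      = ((r^2 - (r^2)⁻¹)^2) ^ (univ.filter (fun p : Fin n × Fin n => p.2 < p.1)).card :=
    Finset.prod_const _
  have e5 : (∏ _i : Fin n, (r^2 - (r^2)⁻¹)) = (r^2 - (r^2)⁻¹) ^ n := by
    rw [Finset.prod_const, Finset.card_univ, Fintype.card_fin]
  rw [e1, e2, e3, e4, e5, hdiag2]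
  have hspow : (r^2 - (r^2)⁻¹)^n
        * ((r^2 - (r^2)⁻¹)^2) ^ (univ.filter (fun p : Fin n × Fin n => p.2 < p.1)).card
      = (r^2 - (r^2)⁻¹) ^ (n * n) := by
    rw [← pow_mul, ← pow_add, card_pairs n]
  rw [← hspow]
  have hDenT : (∏ p : Fin n × Fin n,
      (r ^ (p.1.1 + p.2.1 + 1) - (r ^ (p.1.1 + p.2.1 + 1))⁻¹) / (r ^ 2 - (r ^ 2)⁻¹)) ≠ 0 :=
    prod_ne_zero_iff.2 fun p _ => hden p.1 p.2
  have hQn : ((∏ i : Fin n, r ^ i.1) ^ n) ≠ 0 := pow_ne_zero _ hQne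
  have hSn : ((r^2 - (r^2)⁻¹)^n) ≠ 0 := pow_ne_zero _ hbr
  have hS2P : (((r^2 - (r^2)⁻¹)^2)
      ^ (univ.filter (fun p : Fin n × Fin n => p.2 < p.1)).card) ≠ 0 :=
    pow_ne_zero _ (pow_ne_zero _ hbr)
  rw [mul_inv_cancel₀ hQn, one_mul]
  generalize (∏ p ∈ univ.filter (fun p : Fin n × Fin n => p.2 < p.1),
      ((r ^ (p.1.1 - p.2.1) - (r ^ (p.1.1 - p.2.1))⁻¹) / (r ^ 2 - (r ^ 2)⁻¹)) ^ 2) = N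
  generalize hDg : (∏ p : Fin n × Fin n,
      (r ^ (p.1.1 + p.2.1 + 1) - (r ^ (p.1.1 + p.2.1 + 1))⁻¹) / (r ^ 2 - (r ^ 2)⁻¹)) = D at hDenT ⊢
  generalize hqg : (∏ i : Fin n, r ^ (i.1 : ℕ)) = q at hQne ⊢
  generalize hbg : ((r^2 - (r^2)⁻¹)^2)
      ^ (univ.filter (fun p : Fin n × Fin n => p.2 < p.1)).card = b at hS2P ⊢
  generalize hag : (r^2 - (r^2)⁻¹)^n = a at hSn ⊢
  field_simp
end
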